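/- arXiv:2601.07286 — 2 statements merged into one kernel-verified Lean document; each statement's English description precedes it below -/
import Mathlib

section
/- Let A, B be n×n Hermitian matrices, H = A + B, Q₄ = A⁴ + 4A³B + 6A²B² + 4AB³ + B⁴. Then the eigenvalue vector of H⁴ is weakly majorized by the eigenvalue vector of Re Q₄ = (Q₄ + Q₄*)/2: for every r, the sum of the r largest eigenvalues of H⁴ is at most the sum of the r largest eigenvalues of Re Q₄. -/
open Matrix BigOperators
open scoped ComplexOrder

/-- `descSort f` lists the values of `f` in nonincreasing order:
`descSort f j` is the `j`-th largest value of `f`. -/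
noncomputable def descSort {n : ℕ} (f : Fin n → ℝ) : Fin n → ℝ :=
  f ∘ Tuple.sort (fun i => -(f i))

/-- The singular values of a complex square matrix, in nonincreasing order. -/
noncomputable def singVals {n : ℕ} (Y : Matrix (Fin n) (Fin n) ℂ) : Fin n → ℝ :=
  descSort (fun i => Real.sqrt ((Matrix.posSemidef_conjTranspose_mul_self Y).1.eigenvalues i))

/-- The orthogonal (spectral) projection onto the span of the eigenvectors of `F`
indexed by the set `s`, in an orthonormal eigenbasis of the Hermitian matrix `F`. -/
noncomputable def specProj {n : ℕ} {F : Matrix (Fin n) (Fin n) ℂ} (hF : F.IsHermitian)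
    (s : Finset (Fin n)) : Matrix (Fin n) (Fin n) ℂ :=
  (hF.eigenvectorUnitary : Matrix (Fin n) (Fin n) ℂ) *
    Matrix.diagonal (fun i => if i ∈ s then (1:ℂ) else 0) *
    (hF.eigenvectorUnitary : Matrix (Fin n) (Fin n) ℂ)ᴴ

/-!
Diagonalise `H = A + B` by a unitary `V` and put `M = V⋆AV`, `D = V⋆HV = diag d`. Since
`V⋆BV = D - M`, the matrix `V⋆(Re Q₄)V` is `Re Q₄(M, D - M)`, whose `i`-th diagonal entry is
`d_i⁴ + ∑_k |M_ik|² (d_i - d_k)(5 d_i + 3 d_k)`. Summed over a set `t` of `r` indices carrying the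
largest `d_i⁴`, the correction is nonnegative: the pairs inside `t` add up to
`∑ |M_ik|² (d_i - d_k)²`, and a pair with `k ∉ t` has `|d_k| ≤ |d_i|`. Schur's inequality (a sum
of `r` diagonal entries of `U⋆ diag(g) U` is at most the sum of the `r` largest `g_i`) bounds the
top `r` eigenvalues of `H⁴ = V diag(d⁴) V⋆` by `∑_{i ∈ t} d_i⁴`, and `∑_{i ∈ t} (V⋆(Re Q₄)V)_ii` by
the top `r` eigenvalues of `Re Q₄`.
-/

open Unitary

theorem sum_sum_nonneg_of_add_swap_nonneg {ι : Type*} (f : ι → ι → ℝ) (s : Finset ι)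
    (hf : ∀ i ∈ s, ∀ k ∈ s, 0 ≤ f i k + f k i) : 0 ≤ ∑ i ∈ s, ∑ k ∈ s, f i k := by
  have h : 2 * ∑ i ∈ s, ∑ k ∈ s, f i k = ∑ i ∈ s, ∑ k ∈ s, (f i k + f k i) := by
    simp only [Finset.sum_add_distrib]
    rw [Finset.sum_comm (f := fun i k => f k i)]
    ring
  have := Finset.sum_nonneg fun i hi => Finset.sum_nonneg fun k hk => hf i hi k hk
  linarith

theorem sub_mul_five_mul_add_three_mul_nonneg {x y : ℝ} (h : y ^ 4 ≤ x ^ 4) :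
    0 ≤ (x - y) * (5 * x + 3 * y) := by
  have habs : |y| ≤ |x| := by
    rwa [← pow_le_pow_iff_left₀ (abs_nonneg y) (abs_nonneg x) (by norm_num : (4 : ℕ) ≠ 0),
      (by decide : Even 4).pow_abs, (by decide : Even 4).pow_abs]
  rcases abs_le.1 habs with ⟨h1, h2⟩
  cases abs_cases x <;> nlinarith

section TopSums
variable {ι : Type*} [Fintype ι] [DecidableEq ι]

theorem sum_mul_le_sum_top (g c : ι → ℝ) (t : Finset ι)
    (htop : ∀ i ∈ t, ∀ k ∉ t, g k ≤ g i) (hc0 : ∀ k, 0 ≤ c k) (hc1 : ∀ k, c k ≤ 1)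
    (hsum : ∑ k, c k = t.card) :
    ∑ k, g k * c k ≤ ∑ i ∈ t, g i := by
  rcases t.eq_empty_or_nonempty with rfl | hne
  · have hc : ∀ k, c k = 0 := fun k =>
      (Finset.sum_eq_zero_iff_of_nonneg fun k _ => hc0 k).mp (by simpa using hsum) k
        (Finset.mem_univ k)
    simp [hc]
  -- `θ` separates the values of `g` on `t` from those off `t`, and `∑ (1_t - c) = 0`.
  set θ := t.inf' hne g
  have hsplit : ∑ i ∈ t, g i - ∑ k, g k * c k
      = ∑ k, (g k - θ) * ((if k ∈ t then 1 else 0) - c k) := by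
    simp only [mul_sub, sub_mul, mul_ite, mul_one, mul_zero, Finset.sum_sub_distrib,
      ← Finset.mul_sum, hsum, Finset.sum_ite_mem, Finset.univ_inter, Finset.sum_const,
      nsmul_eq_mul]
    ring
  have hterm : ∀ k, 0 ≤ (g k - θ) * ((if k ∈ t then 1 else 0) - c k) := fun k => by
    by_cases hk : k ∈ t
    · simp only [hk, if_true]
      exact mul_nonneg (sub_nonneg.2 (Finset.inf'_le g hk)) (sub_nonneg.2 (hc1 k))
    · simp only [hk, if_false, zero_sub]
      exact mul_nonneg_of_nonpos_of_nonpos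
        (sub_nonpos.2 ((Finset.le_inf'_iff hne g).2 fun i hi => htop i hi k hk))
        (neg_nonpos.2 (hc0 k))
  linarith [Finset.sum_nonneg fun k (_ : k ∈ Finset.univ) => hterm k]

theorem sum_sum_mul_sub_mul_five_mul_add_three_mul_nonneg (a : ι → ι → ℝ)
    (ha : ∀ i k, 0 ≤ a i k) (ha_symm : ∀ i k, a i k = a k i) (d : ι → ℝ) (t : Finset ι)
    (htop : ∀ i ∈ t, ∀ k ∉ t, d k ^ 4 ≤ d i ^ 4) :
    0 ≤ ∑ i ∈ t, ∑ k, a i k * ((d i - d k) * (5 * d i + 3 * d k)) := by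
  simp only [← Finset.sum_add_sum_compl t, Finset.sum_add_distrib]
  refine add_nonneg (sum_sum_nonneg_of_add_swap_nonneg _ t fun i _ k _ => ?_)
    (Finset.sum_nonneg fun i hi => Finset.sum_nonneg fun k hk => ?_)
  · rw [ha_symm k i]
    nlinarith [mul_nonneg (ha i k) (sq_nonneg (d i - d k))]
  · exact mul_nonneg (ha i k)
      (sub_mul_five_mul_add_three_mul_nonneg (htop i hi k (Finset.mem_compl.1 hk)))

end TopSums

theorem antitone_descSort {n : ℕ} (f : Fin n → ℝ) : Antitone (descSort f) := fun _ _ hab => by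
  simpa [descSort] using Tuple.monotone_sort (fun i => -(f i)) hab

theorem exists_top_sum_descSort_eq {n : ℕ} (f : Fin n → ℝ) {r : ℕ} (hr : r ≤ n) :
    ∃ t : Finset (Fin n), t.card = r ∧ (∀ i ∈ t, ∀ k ∉ t, f k ≤ f i) ∧
      ∑ j ∈ Finset.univ.filter (fun j : Fin n => (j : ℕ) < r), descSort f j = ∑ i ∈ t, f i := by
  set σ := Tuple.sort (fun i => -(f i))
  refine ⟨(Finset.univ.filter (fun j : Fin n => (j : ℕ) < r)).map σ.toEmbedding, ?_, ?_, ?_⟩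
  · rw [Finset.card_map, Fin.card_filter_val_lt, min_eq_right hr]
  · intro i hi k hk
    simp only [Finset.mem_map_equiv, Finset.mem_filter, Finset.mem_univ, true_and,
      not_lt] at hi hk
    simpa [descSort, σ] using antitone_descSort f (Fin.le_def.2 (hi.le.trans hk))
  · rw [Finset.sum_map]
    rfl

section Schur
variable {ι : Type*} [Fintype ι] [DecidableEq ι]

theorem sum_normSq_row_eq_one (U : unitaryGroup ι ℂ) (i : ι) :
    ∑ k, Complex.normSq (U i k) = 1 := by
  have h := congr_fun₂ (Unitary.coe_mul_star_self U) i i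
  simp only [Unitary.coe_star, mul_apply, star_apply, one_apply_eq, Complex.star_def,
    Complex.mul_conj] at h
  exact_mod_cast h

theorem sum_normSq_col_eq_one (U : unitaryGroup ι ℂ) (k : ι) :
    ∑ i, Complex.normSq (U i k) = 1 := by
  have h := congr_fun₂ (Unitary.coe_star_mul_self U) k k
  simp only [mul_apply, star_apply, one_apply_eq, Complex.star_def,
    ← Complex.normSq_eq_conj_mul_self] at h
  exact_mod_cast h

theorem re_conjStarAlgAut_diagonal_apply_self (U : unitaryGroup ι ℂ) (g : ι → ℝ) (i : ι) :
    (conjStarAlgAut ℂ _ U (diagonal (RCLike.ofReal ∘ g)) i i).re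
      = ∑ k, g k * Complex.normSq (U i k) := by
  rw [conjStarAlgAut_apply, mul_apply, Complex.re_sum]
  refine Finset.sum_congr rfl fun k _ => ?_
  rw [mul_diagonal, star_apply, Function.comp_apply, Complex.star_def, mul_right_comm,
    Complex.mul_conj]
  simp [mul_comm]

theorem sum_re_conjStarAlgAut_apply_self_le_sum_top {F : Matrix ι ι ℂ} {W : unitaryGroup ι ℂ}
    {g : ι → ℝ} (hF : F = conjStarAlgAut ℂ _ W (diagonal (RCLike.ofReal ∘ g)))
    (U : unitaryGroup ι ℂ) {s t : Finset ι} (hst : s.card = t.card)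
    (htop : ∀ i ∈ t, ∀ k ∉ t, g k ≤ g i) :
    ∑ i ∈ s, (conjStarAlgAut ℂ _ (star U) F i i).re ≤ ∑ i ∈ t, g i := by
  set X := star U * W
  have hc1 : ∀ k, ∑ i ∈ s, Complex.normSq (X i k) ≤ 1 := fun k =>
    sum_normSq_col_eq_one X k ▸
      Finset.sum_le_sum_of_subset_of_nonneg s.subset_univ fun i _ _ => Complex.normSq_nonneg _
  have hsum : ∑ k, ∑ i ∈ s, Complex.normSq (X i k) = t.card := by
    rw [Finset.sum_comm, Finset.sum_congr rfl fun i _ => sum_normSq_row_eq_one X i]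
    simp [hst]
  rw [hF, ← conjStarAlgAut_mul_apply]
  simp only [re_conjStarAlgAut_diagonal_apply_self]
  rw [Finset.sum_comm]
  simp only [← Finset.mul_sum]
  exact sum_mul_le_sum_top g _ t htop
    (fun k => Finset.sum_nonneg fun i _ => Complex.normSq_nonneg _) hc1 hsum

theorem Matrix.IsHermitian.re_conjStarAlgAut_star_eigenvectorUnitary_apply_self
    {F : Matrix ι ι ℂ} (hF : F.IsHermitian) (i : ι) :
    (conjStarAlgAut ℂ _ (star hF.eigenvectorUnitary) F i i).re = hF.eigenvalues i := by
  simp [hF.conjStarAlgAut_star_eigenvectorUnitary]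

end Schur

section BinomialQuartic
variable {R : Type*} [Ring R] [Algebra ℂ R]

def binomialQuartic (X Y : R) : R :=
  X ^ 4 + (4 : ℂ) • (X ^ 3 * Y) + (6 : ℂ) • (X ^ 2 * Y ^ 2) + (4 : ℂ) • (X * Y ^ 3) + Y ^ 4

theorem map_binomialQuartic {S F : Type*} [Ring S] [Algebra ℂ S] [FunLike F R S]
    [AlgHomClass F ℂ R S] (φ : F) (X Y : R) :
    φ (binomialQuartic X Y) = binomialQuartic (φ X) (φ Y) := by
  simp [binomialQuartic]

theorem binomialQuartic_sub_add_star [StarRing R] [StarModule ℂ R] {M D : R}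
    (hM : IsSelfAdjoint M) (hD : IsSelfAdjoint D) :
    binomialQuartic M (D - M) + star (binomialQuartic M (D - M))
      = (2 : ℕ) • D ^ 4 + (2 : ℕ) • (M * D ^ 3 + D ^ 3 * M - D * M * D ^ 2 - D ^ 2 * M * D)
        + (4 : ℕ) • (M ^ 2 * D ^ 2 + D ^ 2 * M ^ 2) + (2 : ℕ) • (D * M ^ 2 * D)
        - (2 : ℕ) • (M * D * M * D + D * M * D * M) - (6 : ℕ) • (M * D ^ 2 * M) := by
  simp only [binomialQuartic, star_add, star_smul, star_mul, star_pow, star_sub, hM.star_eq,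
    hD.star_eq, Complex.star_def, map_ofNat]
  simp only [← Nat.cast_ofNat (R := ℂ), Nat.cast_smul_eq_nsmul]
  noncomm_ring

end BinomialQuartic

section Core
variable {ι : Type*} [Fintype ι] [DecidableEq ι]

theorem re_half_binomialQuartic_sub_add_star_apply_self {M : Matrix ι ι ℂ} (hM : M.IsHermitian)
    (d : ι → ℝ) (i : ι) :
    (((1 / 2 : ℂ) • (binomialQuartic M (diagonal (RCLike.ofReal ∘ d) - M)
      + star (binomialQuartic M (diagonal (RCLike.ofReal ∘ d) - M))) : Matrix ι ι ℂ) i i).re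
      = d i ^ 4 + ∑ k, Complex.normSq (M i k) * ((d i - d k) * (5 * d i + 3 * d k)) := by
  have hD : IsSelfAdjoint (diagonal (RCLike.ofReal ∘ d) : Matrix ι ι ℂ) := by
    simp [IsSelfAdjoint, Matrix.star_eq_conjTranspose, diagonal_conjTranspose]
  set δ : ι → ℂ := RCLike.ofReal ∘ d
  set N : ι → ℂ := fun k => (Complex.normSq (M i k) : ℂ)
  have hsum : ∀ f : ι → ℂ, ∑ k, M i k * f k * M k i = ∑ k, N k * f k :=
    fun f => Finset.sum_congr rfl fun k _ => by
      rw [← hM.apply k i, mul_right_comm, Complex.star_def, Complex.mul_conj]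
  have hsum₀ : ∑ k, M i k * M k i = ∑ k, N k := by simpa using hsum 1
  have hsum₁ : ∑ k, δ i * M i k * δ k * M k i = δ i * ∑ k, N k * δ k := by
    rw [← hsum, Finset.mul_sum]
    exact Finset.sum_congr rfl fun k _ => by ring
  have hsum_rhs : ∑ k, N k * ((δ i - δ k) * (5 * δ i + 3 * δ k))
      = 5 * δ i ^ 2 * ∑ k, N k - 2 * δ i * ∑ k, N k * δ k - 3 * ∑ k, N k * δ k ^ 2 := by
    simp only [Finset.mul_sum, ← Finset.sum_sub_distrib]
    exact Finset.sum_congr rfl fun k _ => by ring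
  suffices h : (binomialQuartic M (diagonal δ - M) + star (binomialQuartic M (diagonal δ - M))) i i
      = 2 * (δ i ^ 4 + ∑ k, N k * ((δ i - δ k) * (5 * δ i + 3 * δ k))) by
    rw [Matrix.smul_apply, h, smul_eq_mul, ← mul_assoc]
    simp [δ, N, ← Complex.ofReal_pow]
  rw [binomialQuartic_sub_add_star hM hD]
  simp only [diagonal_pow, sq M, Matrix.add_apply, Matrix.sub_apply, Matrix.smul_apply,
    mul_diagonal, diagonal_mul, diagonal_apply_eq]
  simp only [mul_apply, diagonal_apply, mul_ite, ite_mul, mul_zero, zero_mul,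
    Finset.sum_ite_eq, Finset.sum_ite_eq', Finset.mem_univ, if_true, Pi.pow_apply]
  rw [hsum₀, hsum₁, hsum, hsum, hsum_rhs]
  simp only [nsmul_eq_mul]
  push_cast
  ring

theorem sum_eigenvalues_pow_four_le_sum_re_half_binomialQuartic {A B : Matrix ι ι ℂ}
    (hA : A.IsHermitian) (hH : (A + B).IsHermitian) {t : Finset ι}
    (htop : ∀ i ∈ t, ∀ k ∉ t, hH.eigenvalues k ^ 4 ≤ hH.eigenvalues i ^ 4) :
    ∑ i ∈ t, hH.eigenvalues i ^ 4 ≤ ∑ i ∈ t, (conjStarAlgAut ℂ _ (star hH.eigenvectorUnitary)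
      ((1 / 2 : ℂ) • (binomialQuartic A B + (binomialQuartic A B)ᴴ)) i i).re := by
  set φ := conjStarAlgAut ℂ (Matrix ι ι ℂ) (star hH.eigenvectorUnitary)
  have hM : (φ A).IsHermitian := hA.isSelfAdjoint.map φ
  have hφB : φ B = diagonal (RCLike.ofReal ∘ hH.eigenvalues) - φ A := by
    rw [← hH.conjStarAlgAut_star_eigenvectorUnitary, map_add, add_sub_cancel_left]
  have hpos := sum_sum_mul_sub_mul_five_mul_add_three_mul_nonneg
    (fun i k => Complex.normSq (φ A i k)) (fun i k => Complex.normSq_nonneg _)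
    (fun i k => by rw [← hM.apply k i, Complex.star_def, Complex.normSq_conj]) _ t htop
  rw [← star_eq_conjTranspose]
  simp only [map_smul, map_add, map_star, map_binomialQuartic, hφB,
    re_half_binomialQuartic_sub_add_star_apply_self hM, Finset.sum_add_distrib]
  linarith

end Core

/-- `λ(H⁴) ≺_w λ(Re Q₄)`. -/
theorem eig_fourth_weakly_majorized_by_eig_reQ4 {n : ℕ} (A B : Matrix (Fin n) (Fin n) ℂ)
    (hA : A.IsHermitian) (hB : B.IsHermitian)
    (hH4 : ((A + B) ^ 4).IsHermitian)
    (hR4 : ((1 / 2 : ℂ) •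
        ((A ^ 4 + (4 : ℂ) • (A ^ 3 * B) + (6 : ℂ) • (A ^ 2 * B ^ 2)
            + (4 : ℂ) • (A * B ^ 3) + B ^ 4)
          + (A ^ 4 + (4 : ℂ) • (A ^ 3 * B) + (6 : ℂ) • (A ^ 2 * B ^ 2)
            + (4 : ℂ) • (A * B ^ 3) + B ^ 4)ᴴ)).IsHermitian) :
    ∀ r : ℕ, r ≤ n →
      ∑ j ∈ Finset.univ.filter (fun j : Fin n => (j : ℕ) < r), descSort hH4.eigenvalues j ≤
        ∑ j ∈ Finset.univ.filter (fun j : Fin n => (j : ℕ) < r), descSort hR4.eigenvalues j := by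
  intro r hr
  have hH := hA.add hB
  obtain ⟨s, hs, -, hsum_s⟩ := exists_top_sum_descSort_eq hH4.eigenvalues hr
  obtain ⟨t, ht, htop, -⟩ := exists_top_sum_descSort_eq (fun i => hH.eigenvalues i ^ 4) hr
  obtain ⟨u, hu, htop_u, hsum_u⟩ := exists_top_sum_descSort_eq hR4.eigenvalues hr
  have hH4_spec : (A + B) ^ 4 = conjStarAlgAut ℂ _ hH.eigenvectorUnitary
      (diagonal (RCLike.ofReal ∘ fun i => hH.eigenvalues i ^ 4)) := by
    conv_lhs => rw [hH.spectral_theorem]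
    rw [← map_pow, diagonal_pow]
    congr 2
    ext i
    simp
  calc _ = ∑ i ∈ s, hH4.eigenvalues i := hsum_s
    _ = ∑ i ∈ s, (conjStarAlgAut ℂ _ (star hH4.eigenvectorUnitary) ((A + B) ^ 4) i i).re := by
      simp only [hH4.re_conjStarAlgAut_star_eigenvectorUnitary_apply_self]
    _ ≤ ∑ i ∈ t, hH.eigenvalues i ^ 4 :=
      sum_re_conjStarAlgAut_apply_self_le_sum_top hH4_spec _ (hs.trans ht.symm) htop
    _ ≤ _ := sum_eigenvalues_pow_four_le_sum_re_half_binomialQuartic hA hH htop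
    _ ≤ ∑ i ∈ u, hR4.eigenvalues i :=
      sum_re_conjStarAlgAut_apply_self_le_sum_top hR4.spectral_theorem _ (ht.trans hu.symm) htop_u
    _ = _ := hsum_u.symm
end

section
/- Let A, B be n×n Hermitian matrices, H = A + B, X = A - B, and E an orthogonal projection whose range is spanned by eigenvectors of H² associated with its r largest eigenvalues. Then Tr(E((1/2)[X,[X,H²]] - (1/4)[X,H]²)) ≥ 0. -/
open Matrix BigOperators
open scoped ComplexOrder

/-!
In an eigenbasis of `H²` (eigenvalues `λ`), write `Y`, `G` for `X`, `H` in that basis. The `i`-th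
diagonal entry of the conjugated operator is `∑ₖ |Yᵢₖ|² (λᵢ - λₖ) + ¼ ∑ₖ |[Y,G]ᵢₖ|²`, because
`[Y,G]` is skew-Hermitian. Summing over the indices `i` of `E`, the terms with `k` also an index
of `E` cancel in pairs since `|Yᵢₖ| = |Yₖᵢ|`, and the remaining ones are nonnegative because
`λᵢ ≥ λₖ` there.
-/

theorem Finset.sum_sum_mul_sub_nonneg {ι : Type*} [Fintype ι] {a : ι → ι → ℝ}
    (ha_symm : ∀ i k, a i k = a k i) (ha : ∀ i k, 0 ≤ a i k) {d : ι → ℝ} {s : Finset ι}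
    (hd : ∀ i ∈ s, ∀ k ∉ s, d k ≤ d i) :
    0 ≤ ∑ i ∈ s, ∑ k, a i k * (d i - d k) := by
  classical
  have hinner : ∑ i ∈ s, ∑ k ∈ s, a i k * (d i - d k) = 0 := by
    have h : ∑ i ∈ s, ∑ k ∈ s, a i k * (d i - d k) =
        -∑ i ∈ s, ∑ k ∈ s, a i k * (d i - d k) := by
      conv_lhs => rw [Finset.sum_comm]
      rw [← Finset.sum_neg_distrib]
      refine Finset.sum_congr rfl fun i _ => ?_
      rw [← Finset.sum_neg_distrib]
      refine Finset.sum_congr rfl fun k _ => ?_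
      rw [ha_symm]
      ring
    linarith
  have houter : 0 ≤ ∑ i ∈ s, ∑ k ∈ sᶜ, a i k * (d i - d k) :=
    Finset.sum_nonneg fun i hi => Finset.sum_nonneg fun k hk =>
      mul_nonneg (ha i k) (sub_nonneg.2 (hd i hi k (Finset.mem_compl.1 hk)))
  simpa only [← Finset.sum_add_sum_compl s, Finset.sum_add_distrib, hinner, zero_add]
    using houter

theorem IsSelfAdjoint.star_lie {R : Type*} [Ring R] [StarRing R] {a b : R}
    (ha : IsSelfAdjoint a) (hb : IsSelfAdjoint b) : star ⁅a, b⁆ = -⁅a, b⁆ := by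
  rw [Ring.lie_def, star_sub, star_mul, star_mul, ha.star_eq, hb.star_eq, neg_sub]

namespace Matrix

variable {m R 𝕜 : Type*} [Fintype m]

theorem trace_diagonal_indicator_mul [DecidableEq m] [NonAssocSemiring R] (s : Finset m)
    (M : Matrix m m R) :
    trace (diagonal (fun i => if i ∈ s then 1 else 0) * M) = ∑ i ∈ s, M i i := by
  simp [trace, diagonal_mul, Finset.sum_ite_mem]

variable [RCLike 𝕜]

theorem IsHermitian.lie_lie_diagonal_apply_self [DecidableEq m] {Y : Matrix m m 𝕜}
    (hY : Y.IsHermitian) (d : m → ℝ) (i : m) :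
    ⁅Y, ⁅Y, diagonal (RCLike.ofReal ∘ d)⁆⁆ i i =
      ((2 * ∑ k, ‖Y i k‖ ^ 2 * (d i - d k) : ℝ) : 𝕜) := by
  simp only [Ring.lie_def]
  rw [sub_apply, mul_apply, mul_apply]
  simp only [sub_apply, mul_diagonal, diagonal_mul, Function.comp_apply]
  rw [← Finset.sum_sub_distrib]
  push_cast
  rw [Finset.mul_sum]
  refine Finset.sum_congr rfl fun k _ => ?_
  have hsq : Y i k * Y k i = (‖Y i k‖ : 𝕜) ^ 2 := by
    rw [← hY.apply k i, RCLike.star_def, RCLike.mul_conj]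
  linear_combination (2 * ((d i : 𝕜) - d k)) * hsq

theorem mul_self_apply_self_of_conjTranspose_eq_neg {Z : Matrix m m 𝕜} (hZ : Zᴴ = -Z) (i : m) :
    (Z * Z) i i = -((∑ k, ‖Z i k‖ ^ 2 : ℝ) : 𝕜) := by
  rw [mul_apply]
  push_cast
  rw [← Finset.sum_neg_distrib]
  refine Finset.sum_congr rfl fun k _ => ?_
  have hk : Z k i = -star (Z i k) := by
    rw [← conjTranspose_apply, hZ, neg_apply, neg_neg]
  rw [hk, RCLike.star_def, mul_neg, RCLike.mul_conj]

theorem re_trace_indicator_mul_quartic_nonneg [DecidableEq m] {Y G : Matrix m m 𝕜}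
    (hY : Y.IsHermitian) (hG : G.IsHermitian) {d : m → ℝ} {s : Finset m}
    (hd : ∀ i ∈ s, ∀ k ∉ s, d k ≤ d i) :
    0 ≤ RCLike.re (trace (diagonal (fun i => if i ∈ s then 1 else 0) *
      ((1 / 2 : 𝕜) • ⁅Y, ⁅Y, diagonal (RCLike.ofReal ∘ d)⁆⁆ -
        (1 / 4 : 𝕜) • (⁅Y, G⁆ * ⁅Y, G⁆)))) := by
  have hdiag : ∀ i, ((1 / 2 : 𝕜) • ⁅Y, ⁅Y, diagonal (RCLike.ofReal ∘ d)⁆⁆ -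
      (1 / 4 : 𝕜) • (⁅Y, G⁆ * ⁅Y, G⁆) : Matrix m m 𝕜) i i =
        ((∑ k, ‖Y i k‖ ^ 2 * (d i - d k) + (∑ k, ‖⁅Y, G⁆ i k‖ ^ 2) / 4 : ℝ) : 𝕜) := by
    intro i
    rw [sub_apply, smul_apply, smul_apply, hY.lie_lie_diagonal_apply_self,
      mul_self_apply_self_of_conjTranspose_eq_neg (IsSelfAdjoint.star_lie hY hG)]
    push_cast
    ring
  have hYsymm : ∀ i k, ‖Y i k‖ ^ 2 = ‖Y k i‖ ^ 2 := fun i k => by rw [← hY.apply, norm_star]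
  rw [trace_diagonal_indicator_mul]
  simp only [hdiag, ← RCLike.ofReal_sum, RCLike.ofReal_re, Finset.sum_add_distrib]
  exact add_nonneg (Finset.sum_sum_mul_sub_nonneg hYsymm (fun _ _ => by positivity) hd)
    (Finset.sum_nonneg fun _ _ => by positivity)

end Matrix

theorem trace_proj_quartic_test_nonneg_general {n : ℕ} (A B : Matrix (Fin n) (Fin n) ℂ)
    (hA : A.IsHermitian) (hB : B.IsHermitian)
    (hH2 : ((A + B) ^ 2).IsHermitian)
    (s : Finset (Fin n))
    (hmax : ∀ i ∈ s, ∀ j ∉ s, hH2.eigenvalues j ≤ hH2.eigenvalues i) :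
    0 ≤ (Matrix.trace (specProj hH2 s *
        ((1 / 2 : ℂ) •
          ((A - B) * ((A - B) * (A + B) ^ 2 - (A + B) ^ 2 * (A - B))
            - ((A - B) * (A + B) ^ 2 - (A + B) ^ 2 * (A - B)) * (A - B))
        - (1 / 4 : ℂ) •
          (((A - B) * (A + B) - (A + B) * (A - B)) *
            ((A - B) * (A + B) - (A + B) * (A - B)))))).re := by
  let φ := Unitary.conjStarAlgAut ℂ (Matrix (Fin n) (Fin n) ℂ) (star hH2.eigenvectorUnitary)
  have htrace : ∀ M, trace (specProj hH2 s * M) =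
      trace (diagonal (fun i => if i ∈ s then 1 else 0) * φ M) := fun M => by
    simp only [specProj, φ, Unitary.conjStarAlgAut_star_apply, star_eq_conjTranspose,
      Matrix.mul_assoc]
    rw [trace_mul_comm]
    simp only [Matrix.mul_assoc]
  have hspec : φ ((A + B) ^ 2) = diagonal (RCLike.ofReal ∘ hH2.eigenvalues) :=
    hH2.conjStarAlgAut_star_eigenvectorUnitary
  rw [htrace]
  convert re_trace_indicator_mul_quartic_nonneg
    (IsSelfAdjoint.map (hA.sub hB) φ) (IsSelfAdjoint.map (hA.add hB) φ) hmax using 4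
  rw [← hspec]
  simp only [Ring.lie_def, map_sub, map_mul, map_smul]
  rfl -- `RCLike.re` on `ℂ` unfolds to `Complex.re`

/-- If `E` is a spectral projection of `H²` for its `r` largest eigenvalues, then
`Tr(E((1/2)[X,[X,H²]] - (1/4)[X,H]²)) ≥ 0`, where `H = A + B`, `X = A - B`. -/
theorem trace_proj_quartic_test_nonneg {n r : ℕ} (A B : Matrix (Fin n) (Fin n) ℂ)
    (hA : A.IsHermitian) (hB : B.IsHermitian)
    (hH2 : ((A + B) ^ 2).IsHermitian)
    (s : Finset (Fin n)) (hs : s.card = r)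
    (hmax : ∀ i ∈ s, ∀ j ∉ s, hH2.eigenvalues j ≤ hH2.eigenvalues i) :
    0 ≤ (Matrix.trace (specProj hH2 s *
        ((1 / 2 : ℂ) •
          ((A - B) * ((A - B) * (A + B) ^ 2 - (A + B) ^ 2 * (A - B))
            - ((A - B) * (A + B) ^ 2 - (A + B) ^ 2 * (A - B)) * (A - B))
        - (1 / 4 : ℂ) •
          (((A - B) * (A + B) - (A + B) * (A - B)) *
            ((A - B) * (A + B) - (A + B) * (A - B)))))).re :=
  trace_proj_quartic_test_nonneg_general A B hA hB hH2 s hmax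
end
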